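/- In finite Hex, no position admits simultaneously a Red winning chain and a Blue winning chain. -/

import Mathlib

/-- Hexagonal adjacency on the grid model of the Hex board: the six neighbours of a
tile are obtained by the displacements `(±1,0)`, `(0,±1)`, `(1,-1)` and `(-1,1)`. -/
def hexAdj (p q : ℤ × ℤ) : Prop :=
  (p.1 - q.1, p.2 - q.2) ∈
    ({(1, 0), (-1, 0), (0, 1), (0, -1), (1, -1), (-1, 1)} : Set (ℤ × ℤ))

/-- A winning chain for the player `red` in a position `c` of the `n × n` Hex board
(a partial assignment of tiles to the players: `some true` = Red, `some false` = Blue,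
`none` = empty): a nonempty list of tiles of that player's colour, consecutively
hex-adjacent, containing a tile on each of that player's two opposite sides. -/
def WinningChainPos (n : ℕ) (c : Fin n × Fin n → Option Bool) (red : Bool) : Prop :=
  ∃ l : List (Fin n × Fin n), l ≠ [] ∧
    (∀ t ∈ l, c t = some red) ∧
    l.Chain' (fun a b => hexAdj ((a.1 : ℤ), (a.2 : ℤ)) ((b.1 : ℤ), (b.2 : ℤ))) ∧
    (if red then
      (∃ a ∈ l, (a.1 : ℕ) = 0) ∧ (∃ b ∈ l, (b.1 : ℕ) = n - 1)
    else
      (∃ a ∈ l, (a.2 : ℕ) = 0) ∧ (∃ b ∈ l, (b.2 : ℕ) = n - 1))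

/-!
Rows are indexed by the first coordinate. Prolong a red path `P` from the bottom row to the top
row by one cell below and one cell above the board. For a cell `q` off `P`, count mod 2 the edges
of `P` crossing the horizontal ray that leaves `q` to the left, between its row and the next. When
`q` moves to a neighbouring cell off `P`, the two rays differ either by edges at `q` only, which
are not edges of `P`, or by the edges leaving a segment of one row; in the latter case the change
telescopes along `P` to a contribution of its two ends, which vanishes because they lie outside
the board. Hence the parity is constant along a blue path. It is `0` in the leftmost column, where
the ray is empty, and `1` in the rightmost column, where the ray meets every edge of `P` between
the row of `q` and the next, and `P` runs from below these rows to above them. So a blue path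
joining the left and right sides must meet `P`.
-/

open List

namespace List

variable {α β M : Type*}

theorem sum_zipWith_tail_eq_sub_of_isChain [AddCommGroup M] {f : α → α → M} {g : α → M} :
    ∀ {l : List α} (hl : l ≠ []), l.IsChain (fun u v => f u v = g v - g u) →
      (zipWith f l l.tail).sum = g (l.getLast hl) - g (l.head hl)
  | [_], _, _ => by simp
  | a :: b :: l, _, h => by
    rw [isChain_cons_cons] at h
    have ih := sum_zipWith_tail_eq_sub_of_isChain (cons_ne_nil b l) h.2
    simp only [tail_cons, zipWith_cons_cons, sum_cons] at ih ⊢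
    rw [ih, h.1, getLast_cons_cons, head_cons, head_cons]
    abel

theorem sum_zipWith_add [AddCommMonoid M] (f g : α → β → M) :
    ∀ (l : List α) (l' : List β),
      (zipWith (fun a b => f a b + g a b) l l').sum = (zipWith f l l').sum + (zipWith g l l').sum
  | [], _ => by simp
  | _ :: _, [] => by simp
  | a :: l, b :: l' => by
    simp only [zipWith_cons_cons, sum_cons, sum_zipWith_add f g l l']
    abel

theorem sum_zipWith_eq_zero [AddMonoid M] {f : α → β → M} :
    ∀ {l : List α} {l' : List β}, (∀ a ∈ l, ∀ b ∈ l', f a b = 0) → (zipWith f l l').sum = 0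
  | [], _, _ => by simp
  | _ :: _, [], _ => by simp
  | a :: l, b :: l', h => by
    rw [zipWith_cons_cons, sum_cons, h a mem_cons_self b mem_cons_self, zero_add]
    exact sum_zipWith_eq_zero fun x hx y hy => h x (mem_cons_of_mem _ hx) y (mem_cons_of_mem _ hy)

theorem IsChain.exists_isChain_head_getLast {R : α → α → Prop} [Std.Symm R] {l : List α}
    (hl : l.IsChain R) {a b : α} (ha : a ∈ l) (hb : b ∈ l) :
    ∃ (m : List α) (hm : m ≠ []), m.IsChain R ∧ m ⊆ l ∧ m.head hm = a ∧ m.getLast hm = b := by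
  let r x y := R x y ∧ x ∈ l ∧ y ∈ l
  have hne : l ≠ [] := ne_nil_of_mem ha
  have hr : ∀ x ∈ l, Relation.ReflTransGen r (l.head hne) x :=
    (hl.imp_of_mem_imp fun x y hx hy h => ⟨h, hx, hy⟩).induction _ _
      (fun _ _ hxy h => h.tail hxy) (fun _ => .refl)
  have : Std.Symm r := ⟨fun _ _ h => ⟨symm h.1, h.2.2, h.2.1⟩⟩
  have hab : Relation.ReflTransGen r a b := (symm (hr a ha)).trans (hr b hb)
  obtain ⟨m, hm, hmr, hma, hmb⟩ := exists_isChain_ne_nil_of_relationReflTransGen hab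
  refine ⟨m, hm, hmr.imp fun _ _ h => h.1, fun x hx => ?_, hma, hmb⟩
  exact hmr.induction (· ∈ l) m (fun _ _ h _ => h.2.2) (fun _ => hma ▸ ha) x hx

theorem IsChain.apply_eq_of_mem {f : α → β} {l : List α} (hl : l.IsChain fun x y => f x = f y)
    {a b : α} (ha : a ∈ l) (hb : b ∈ l) : f a = f b := by
  have h := hl.induction (fun x => f x = f (l.head (ne_nil_of_mem ha))) l
    (fun _ _ hxy hx => hxy ▸ hx) (fun _ => rfl)
  rw [h a ha, h b hb]

end List

namespace Hex

theorem hexAdj_iff {p q : ℤ × ℤ} :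
    hexAdj p q ↔ (q.1 = p.1 ∧ q.2 = p.2 + 1) ∨ (p.1 = q.1 ∧ p.2 = q.2 + 1) ∨
      (q.1 = p.1 + 1 ∧ (q.2 = p.2 ∨ q.2 = p.2 - 1)) ∨
      (p.1 = q.1 + 1 ∧ (p.2 = q.2 ∨ p.2 = q.2 - 1)) := by
  simp only [hexAdj, Set.mem_insert_iff, Set.mem_singleton_iff, Prod.mk.injEq]
  omega

instance : Std.Symm hexAdj where
  symm _ _ h := by rw [hexAdj_iff] at h ⊢; omega

/-- Crossing of the edge `uv` with the horizontal ray that leaves the cell `q` to the left,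
between the rows `q.1` and `q.1 + 1`. -/
def rayCross (q u v : ℤ × ℤ) : ZMod 2 :=
  if (u.1 = q.1 ∧ u.2 < q.2 ∧ v.1 = q.1 + 1) ∨ (v.1 = q.1 ∧ v.2 < q.2 ∧ u.1 = q.1 + 1)
  then 1 else 0

def crossParity (P : List (ℤ × ℤ)) (q : ℤ × ℤ) : ZMod 2 :=
  (zipWith (rayCross q) P P.tail).sum

def leftOf (q w : ℤ × ℤ) : ZMod 2 := if w.1 = q.1 ∧ w.2 < q.2 then 1 else 0

def rowLE (r : ℤ) (w : ℤ × ℤ) : ZMod 2 := if w.1 ≤ r then 1 else 0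

theorem rayCross_eq_of_snd_succ {q u v : ℤ × ℤ} (hu : u ≠ q) (hv : v ≠ q) :
    rayCross q u v = rayCross (q.1, q.2 + 1) u v := by
  obtain ⟨q1, q2⟩ := q; obtain ⟨u1, u2⟩ := u; obtain ⟨v1, v2⟩ := v
  simp only [rayCross, ne_eq, Prod.mk.injEq] at *
  split_ifs <;> first | rfl | omega

theorem rayCross_add_rayCross_of_fst_succ {q q' u v : ℤ × ℤ} (h1 : q'.1 = q.1 + 1)
    (h2 : q'.2 = q.2 ∨ q'.2 = q.2 - 1) (huv : hexAdj u v)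
    (hu : u ≠ q) (hv : v ≠ q) (hu' : u ≠ q') (hv' : v ≠ q') :
    rayCross q u v + rayCross q' u v = leftOf q' u + leftOf q' v := by
  obtain ⟨q1, q2⟩ := q; obtain ⟨q1', q2'⟩ := q'; obtain ⟨u1, u2⟩ := u; obtain ⟨v1, v2⟩ := v
  simp only [hexAdj_iff, rayCross, leftOf, ne_eq, Prod.mk.injEq] at *
  rcases huv with ⟨_, _⟩ | ⟨_, _⟩ | ⟨_, _ | _⟩ | ⟨_, _ | _⟩ <;> rcases h2 with h2 | h2 <;>
    split_ifs <;> first | decide | omega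

theorem rayCross_eq_zero_of_le_snd {q u v : ℤ × ℤ} (hu : q.2 ≤ u.2) (hv : q.2 ≤ v.2) :
    rayCross q u v = 0 := by
  rw [rayCross, if_neg]; omega

theorem rayCross_eq_rowLE_add_rowLE {q u v : ℤ × ℤ} (huv : hexAdj u v) (hu : u.2 ≤ q.2)
    (hv : v.2 ≤ q.2) (huq : u ≠ q) (hvq : v ≠ q) :
    rayCross q u v = rowLE q.1 u + rowLE q.1 v := by
  obtain ⟨q1, q2⟩ := q; obtain ⟨u1, u2⟩ := u; obtain ⟨v1, v2⟩ := v
  simp only [hexAdj_iff, rayCross, rowLE, ne_eq, Prod.mk.injEq] at *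
  rcases huv with ⟨_, _⟩ | ⟨_, _⟩ | ⟨_, _ | _⟩ | ⟨_, _ | _⟩ <;> split_ifs <;> first | decide | omega

theorem crossParity_eq_zero {P : List (ℤ × ℤ)} {q : ℤ × ℤ} (hq : ∀ x ∈ P, q.2 ≤ x.2) :
    crossParity P q = 0 :=
  sum_zipWith_eq_zero fun u hu v hv =>
    rayCross_eq_zero_of_le_snd (hq u hu) (hq v (mem_of_mem_tail hv))

theorem crossParity_eq_of_snd_succ {P : List (ℤ × ℤ)} {q : ℤ × ℤ} (hq : q ∉ P) :
    crossParity P q = crossParity P (q.1, q.2 + 1) := by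
  rw [← CharTwo.add_eq_zero, crossParity, crossParity, ← sum_zipWith_add]
  refine sum_zipWith_eq_zero fun u hu v hv => ?_
  rw [rayCross_eq_of_snd_succ (ne_of_mem_of_not_mem hu hq)
    (ne_of_mem_of_not_mem (mem_of_mem_tail hv) hq), CharTwo.add_self_eq_zero]

section Telescoping

variable {P : List (ℤ × ℤ)} (hP : P ≠ []) (hch : P.IsChain hexAdj)
include hch

theorem crossParity_eq_of_fst_succ {q q' : ℤ × ℤ} (h1 : q'.1 = q.1 + 1)
    (h2 : q'.2 = q.2 ∨ q'.2 = q.2 - 1) (hq : q ∉ P) (hq' : q' ∉ P)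
    (hs : (P.head hP).1 ≠ q'.1) (ht : (P.getLast hP).1 ≠ q'.1) :
    crossParity P q = crossParity P q' := by
  have hch' : P.IsChain fun u v => rayCross q u v + rayCross q' u v = leftOf q' v - leftOf q' u :=
    hch.imp_of_mem_imp fun u v hu hv huv => by
      rw [CharTwo.sub_eq_add, add_comm (leftOf q' v)]
      exact rayCross_add_rayCross_of_fst_succ h1 h2 huv (ne_of_mem_of_not_mem hu hq)
        (ne_of_mem_of_not_mem hv hq) (ne_of_mem_of_not_mem hu hq') (ne_of_mem_of_not_mem hv hq')
  rw [← CharTwo.add_eq_zero, crossParity, crossParity, ← sum_zipWith_add,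
    sum_zipWith_tail_eq_sub_of_isChain hP hch', leftOf, leftOf, if_neg (fun h => ht h.1),
    if_neg (fun h => hs h.1), sub_zero]

theorem crossParity_eq_of_hexAdj {q q' : ℤ × ℤ} (hqq' : hexAdj q q') (hq : q ∉ P) (hq' : q' ∉ P)
    (hrow : q.1 ∈ Set.Ioo (P.head hP).1 (P.getLast hP).1)
    (hrow' : q'.1 ∈ Set.Ioo (P.head hP).1 (P.getLast hP).1) :
    crossParity P q = crossParity P q' := by
  rcases hexAdj_iff.1 hqq' with ⟨h1, h2⟩ | ⟨h1, h2⟩ | ⟨h1, h2⟩ | ⟨h1, h2⟩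
  · obtain rfl : q' = (q.1, q.2 + 1) := Prod.ext h1 h2
    exact crossParity_eq_of_snd_succ hq
  · obtain rfl : q = (q'.1, q'.2 + 1) := Prod.ext h1 h2
    exact (crossParity_eq_of_snd_succ hq').symm
  · exact crossParity_eq_of_fst_succ hP hch h1 h2 hq hq' hrow'.1.ne hrow'.2.ne'
  · exact (crossParity_eq_of_fst_succ hP hch h1 h2 hq' hq hrow.1.ne hrow.2.ne').symm

theorem crossParity_eq_one {q : ℤ × ℤ} (hq : q ∉ P) (hcol : ∀ x ∈ P, x.2 ≤ q.2)
    (hrow : q.1 ∈ Set.Ico (P.head hP).1 (P.getLast hP).1) : crossParity P q = 1 := by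
  have hch' : P.IsChain fun u v => rayCross q u v = rowLE q.1 v - rowLE q.1 u :=
    hch.imp_of_mem_imp fun u v hu hv huv => by
      rw [CharTwo.sub_eq_add, add_comm]
      exact rayCross_eq_rowLE_add_rowLE huv (hcol u hu) (hcol v hv)
        (ne_of_mem_of_not_mem hu hq) (ne_of_mem_of_not_mem hv hq)
  rw [crossParity, sum_zipWith_tail_eq_sub_of_isChain hP hch', rowLE, rowLE,
    if_neg (not_le.2 hrow.2), if_pos hrow.1]
  decide

end Telescoping

theorem not_disjoint_of_crossing {N : ℤ} {P Q : List (ℤ × ℤ)} (hP : P ≠ [])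
    (hPch : P.IsChain hexAdj) (hQch : Q.IsChain hexAdj)
    (hPcol : ∀ x ∈ P, 0 ≤ x.2 ∧ x.2 < N) (hQrow : ∀ x ∈ Q, 0 ≤ x.1 ∧ x.1 < N)
    (hPh : (P.head hP).1 = 0) (hPl : (P.getLast hP).1 = N - 1)
    {a b : ℤ × ℤ} (ha : a ∈ Q) (hb : b ∈ Q) (ha0 : a.2 = 0) (hbN : b.2 = N - 1) :
    ¬ P.Disjoint Q := by
  intro hPQ
  set s := P.head hP
  set t := P.getLast hP
  set P' := (-1, s.2) :: (P ++ [(N, t.2)])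
  have hP' : P' ≠ [] := cons_ne_nil _ _
  have hP'ends : (P'.head hP').1 = -1 ∧ (P'.getLast hP').1 = N := by simp [P']
  have hP'ch : P'.IsChain hexAdj := by
    have hs : hexAdj (-1, s.2) s := hexAdj_iff.2 (by omega)
    have ht : hexAdj t (N, t.2) := hexAdj_iff.2 (by omega)
    simp only [P', isChain_cons, isChain_append, head?_append, head?_eq_some_head hP,
      getLast?_eq_some_getLast hP]
    simpa [hPch] using ⟨hs, ht⟩
  have hP'col : ∀ x ∈ P', 0 ≤ x.2 ∧ x.2 < N := by
    intro x hx
    simp only [P', mem_cons, mem_append, not_mem_nil, or_false] at hx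
    rcases hx with rfl | hx | rfl
    exacts [hPcol s (head_mem hP), hPcol x hx, hPcol t (getLast_mem hP)]
  have hQP' : ∀ x ∈ Q, x ∉ P' := by
    intro x hx hxP'
    simp only [P', mem_cons, mem_append, not_mem_nil, or_false] at hxP'
    rcases hxP' with rfl | hxP | rfl
    exacts [by linarith [hQrow _ hx], hPQ hxP hx, by linarith [hQrow _ hx]]
  have hQrow' : ∀ x ∈ Q, x.1 ∈ Set.Ioo (P'.head hP').1 (P'.getLast hP').1 := fun x hx => by
    rw [hP'ends.1, hP'ends.2]; exact ⟨by linarith [hQrow x hx], (hQrow x hx).2⟩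
  have hab : crossParity P' a = crossParity P' b :=
    (hQch.imp_of_mem_imp fun x y hx hy hxy => crossParity_eq_of_hexAdj hP' hP'ch hxy
      (hQP' x hx) (hQP' y hy) (hQrow' x hx) (hQrow' y hy)).apply_eq_of_mem ha hb
  have h0 : crossParity P' a = 0 := crossParity_eq_zero fun x hx => ha0 ▸ (hP'col x hx).1
  have h1 : crossParity P' b = 1 :=
    crossParity_eq_one hP' hP'ch (hQP' b hb) (fun x hx => by linarith [hP'col x hx])
      (Set.Ioo_subset_Ico_self (hQrow' b hb))
  rw [h0, h1] at hab
  exact zero_ne_one hab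

end Hex

/-- In finite Hex, no position admits simultaneously a Red winning chain and a Blue
winning chain. -/
theorem stmt10 (n : ℕ) (c : Fin n × Fin n → Option Bool) :
    ¬ (WinningChainPos n c true ∧ WinningChainPos n c false) := by
  rintro ⟨⟨lR, -, hR, hRch, ⟨a, ha, ha0⟩, b, hb, hbn⟩,
    ⟨lB, -, hB, hBch, ⟨a', ha', ha'0⟩, b', hb', hb'n⟩⟩
  let f : Fin n × Fin n → ℤ × ℤ := fun t => ((t.1 : ℤ), (t.2 : ℤ))
  have hf : f.Injective := fun t t' h => by simpa [f, Prod.ext_iff, Fin.ext_iff] using h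
  have hbound : ∀ l : List (Fin n × Fin n), ∀ x ∈ l.map f,
      (0 ≤ x.1 ∧ x.1 < n) ∧ (0 ≤ x.2 ∧ x.2 < n) :=
    fun l => forall_mem_map.2 fun t _ => by simp [f]
  have hn : ((n - 1 : ℕ) : ℤ) = n - 1 := by have := a.1.isLt; omega
  obtain ⟨P, hP, hPch, hPR, hPh, hPl⟩ :=
    (isChain_map f |>.2 hRch).exists_isChain_head_getLast (mem_map_of_mem ha) (mem_map_of_mem hb)
  refine Hex.not_disjoint_of_crossing hP hPch (isChain_map f |>.2 hBch)
    (fun x hx => (hbound lR x (hPR hx)).2) (fun x hx => (hbound lB x hx).1)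
    (by simp [hPh, f, ha0]) (by simp [hPl, f, hbn, hn]) (mem_map_of_mem ha') (mem_map_of_mem hb')
    (by simp [f, ha'0]) (by simp [f, hb'n, hn]) fun x hxR hxB => ?_
  obtain ⟨t, ht, rfl⟩ := mem_map.1 (hPR hxR)
  obtain ⟨t', ht', htt'⟩ := mem_map.1 hxB
  cases hf htt'
  simpa using (hR t ht).symm.trans (hB t ht')
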